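/- Let V be a vector space with a flag F = (0 = V_0 ≤ ... ≤ V_k = V), compatible forms ω, U ≨ U' ≤ V with dim U' - dim U ≥ 2, U almost transversal to (F,ω) and U' nearly transversal to F. Set m = max{ i | ⟨V_i,U⟩ ∩ U' = U }. Then m = max{ i | V_i ∩ U' = 0 }. -/
import Mathlib


open Module

variable {F V : Type*} [Field F] [AddCommGroup V] [Module F V]

/-- A family `ω` of sesquilinear forms is compatible with the flag `Vf` if the radical of
`ω i` (as a form on `Vf i`) is `Vf (i-1)`, for `1 ≤ i ≤ k`. -/
def Compatible {σ : F →+* F} (k : ℕ) (Vf : ℕ → Submodule F V)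
    (ω : ℕ → V →ₗ[F] V →ₛₗ[σ] F) : Prop :=
  ∀ i, 1 ≤ i → i ≤ k → ∀ x ∈ Vf i, ((∀ y ∈ Vf i, ω i x y = 0) ↔ x ∈ Vf (i - 1))

/-- The restriction of a sesquilinear form to a submodule is nondegenerate. -/
def NondegOn {σ : F →+* F} (B : V →ₗ[F] V →ₛₗ[σ] F) (S : Submodule F V) : Prop :=
  ∀ x ∈ S, (∀ y ∈ S, B x y = 0) → x = 0

/-- `U` is almost transversal to the flag: `U ⊓ V_i ≠ ⊥` implies `⟨U, V_i⟩` has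
codimension at most 1 in `V`. -/
def AlmostTransversal [FiniteDimensional F V] (k : ℕ) (Vf : ℕ → Submodule F V)
    (U : Submodule F V) : Prop :=
  ∀ i ≤ k, U ⊓ Vf i ≠ ⊥ → finrank F V ≤ finrank F ↥(U ⊔ Vf i) + 1

/-- `U'` is nearly transversal to the flag: `⟨U', V_i⟩ ≠ V` implies
`dim (U' ⊓ V_i) ≤ 1`. -/
def NearlyTransversal [FiniteDimensional F V] (k : ℕ) (Vf : ℕ → Submodule F V)
    (U' : Submodule F V) : Prop :=
  ∀ i ≤ k, U' ⊔ Vf i ≠ ⊤ → finrank F ↥(U' ⊓ Vf i) ≤ 1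

/-- With `U` almost transversal to `(F,ω)`, `U'` nearly transversal
to `F`, `U ≨ U'` and `dim U' - dim U ≥ 2`, the maximum `m` of
`{ i | ⟨V_i, U⟩ ⊓ U' = U }` equals the maximum of `{ i | V_i ⊓ U' = ⊥ }`. -/
theorem max_sup_inter_eq_max_inf {σ : F →+* F} [FiniteDimensional F V]
    (k : ℕ) (Vf : ℕ → Submodule F V) (hmono : Monotone Vf)
    (h0 : Vf 0 = ⊥) (htop : Vf k = ⊤)
    (ω : ℕ → V →ₗ[F] V →ₛₗ[σ] F) (hcompat : Compatible k Vf ω)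
    (U U' : Submodule F V) (hUU' : U < U')
    (hdim2 : finrank F U + 2 ≤ finrank F U')
    (halmost : AlmostTransversal k Vf U)
    (hnd : ∀ kU : ℕ, (U ⊓ Vf kU ≠ ⊥ ∧ ∀ j < kU, U ⊓ Vf j = ⊥) →
      NondegOn (ω kU) (U ⊓ Vf kU))
    (hnearly : NearlyTransversal k Vf U')
    (m : ℕ) (hm : (Vf m ⊔ U) ⊓ U' = U)
    (hmmax : ∀ j, m < j → j ≤ k → (Vf j ⊔ U) ⊓ U' ≠ U) :
    Vf m ⊓ U' = ⊥ ∧ ∀ j, m < j → j ≤ k → Vf j ⊓ U' ≠ ⊥ := by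
  have hUle : U ≤ U' := hUU'.le
  -- m ≤ k
  have hmk : m ≤ k := by
    by_contra hmk
    have : Vf m = ⊤ := top_le_iff.mp (htop ▸ hmono (le_of_not_ge hmk))
    rw [this, top_sup_eq, top_inf_eq] at hm
    exact hUU'.ne' hm
  constructor
  · -- Vf m ⊓ U' = ⊥
    by_contra hne
    have hle : Vf m ⊓ U' ≤ U := by
      calc Vf m ⊓ U' ≤ (Vf m ⊔ U) ⊓ U' := inf_le_inf_right U' le_sup_left
        _ = U := hm
    have hUVm : U ⊓ Vf m ≠ ⊥ := by
      intro h
      apply hne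
      rw [← le_bot_iff] at h ⊢
      intro x hx
      exact h (Submodule.mem_inf.mpr ⟨hle hx, (Submodule.mem_inf.mp hx).1⟩)
    have hcod := halmost m hmk hUVm
    have hsum := Submodule.finrank_sup_add_finrank_inf_eq (Vf m ⊔ U) U'
    rw [sup_comm U (Vf m)] at hcod
    have h1 : finrank F ↥((Vf m ⊔ U) ⊓ U') = finrank F U := by rw [hm]
    have h2 : finrank F ↥((Vf m ⊔ U) ⊔ U') ≤ finrank F V := Submodule.finrank_le _
    omega
  · -- second conjunct
    intro j hmj hjk hbot
    apply hmmax j hmj hjk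
    apply le_antisymm
    · intro x hx
      obtain ⟨hx1, hx2⟩ := Submodule.mem_inf.mp hx
      obtain ⟨v, hv, u, hu, rfl⟩ := Submodule.mem_sup.mp hx1
      have hv' : v ∈ Vf j ⊓ U' := by
        refine Submodule.mem_inf.mpr ⟨hv, ?_⟩
        rw [(add_sub_cancel_right v u).symm]
        exact Submodule.sub_mem _ hx2 (hUle hu)
      rw [hbot] at hv'
      simp only [Submodule.mem_bot] at hv'
      simpa [hv'] using hu
    · exact le_inf (le_sup_right : U ≤ Vf j ⊔ U) hUle
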